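/- arXiv:1703.05867 — 7 statements merged into one kernel-verified Lean document; each statement's English description precedes it below -/
import Mathlib

section
/- If the Laplacian eigenvectors are real-valued, then for any multiindex α = (α_1,...,α_K), any α_0, and any f : V → ℝ, the value T_{α_K}∘⋯∘T_{α_1} f(α_0) is invariant under any permutation of the tuple (α_0, α_1, ..., α_K). -/
/-- Real graph translation: `(T_i f)(n) = √N Σ_k f̂(λ_k) φ_k(i) φ_k(n)` for a real
orthonormal eigenbasis `φ`. -/
noncomputable def rtrans {N : ℕ} (φ : Fin N → Fin N → ℝ) (i : Fin N) (f : Fin N → ℝ) :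
    Fin N → ℝ :=
  fun n => Real.sqrt N * ∑ k, (∑ m, f m * φ k m) * φ k i * φ k n

/-- Iterated translation `T_{α_K} ∘ ⋯ ∘ T_{α_1} f` along the list `α = [α_1, …, α_K]`. -/
noncomputable def rtransList {N : ℕ} (φ : Fin N → Fin N → ℝ) (α : List (Fin N))
    (f : Fin N → ℝ) : Fin N → ℝ :=
  α.foldl (fun g i => rtrans φ i g) f

private lemma rtrans_hat {N : ℕ} (φ : Fin N → Fin N → ℝ)
    (horth : ∀ k l, (∑ n, φ k n * φ l n) = if k = l then (1 : ℝ) else 0)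
    (i k : Fin N) (f : Fin N → ℝ) :
    (∑ m, rtrans φ i f m * φ k m)
      = Real.sqrt N * ((∑ m, f m * φ k m) * φ k i) := by
  have h1 : ∀ m, rtrans φ i f m * φ k m
      = ∑ l, Real.sqrt N * ((∑ m', f m' * φ l m') * φ l i) * (φ l m * φ k m) := by
    intro m
    rw [rtrans, Finset.mul_sum, Finset.sum_mul]
    exact Finset.sum_congr rfl fun l _ => by ring
  calc (∑ m, rtrans φ i f m * φ k m)
      = ∑ l, Real.sqrt N * ((∑ m', f m' * φ l m') * φ l i) * (∑ m, φ l m * φ k m) := by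
        simp only [h1]
        rw [Finset.sum_comm]
        exact Finset.sum_congr rfl fun l _ => (Finset.mul_sum _ _ _).symm
    _ = ∑ l, if l = k then Real.sqrt N * ((∑ m', f m' * φ l m') * φ l i) else 0 := by
        refine Finset.sum_congr rfl fun l _ => ?_
        rw [horth l k]; split <;> simp
    _ = Real.sqrt N * ((∑ m, f m * φ k m) * φ k i) := by
        simp [Finset.sum_ite_eq']

private lemma col_orth {N : ℕ} (φ : Fin N → Fin N → ℝ)
    (horth : ∀ k l, (∑ n, φ k n * φ l n) = if k = l then (1 : ℝ) else 0)
    (m n : Fin N) : (∑ k, φ k m * φ k n) = if m = n then (1 : ℝ) else 0 := by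
  have hM : (Matrix.of φ) * (Matrix.of φ).transpose = 1 := by
    ext k l
    simpa [Matrix.mul_apply, Matrix.one_apply] using horth k l
  have hM' : (Matrix.of φ).transpose * (Matrix.of φ) = 1 := mul_eq_one_comm.mp hM
  have := congrFun (congrFun hM' m) n
  simpa [Matrix.mul_apply, Matrix.one_apply] using this

private lemma rtransList_closed {N : ℕ} (φ : Fin N → Fin N → ℝ)
    (horth : ∀ k l, (∑ n, φ k n * φ l n) = if k = l then (1 : ℝ) else 0) :
    ∀ (α : List (Fin N)) (f : Fin N → ℝ) (n : Fin N),
      rtransList φ α f n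
        = Real.sqrt N ^ α.length *
            ∑ k, (∑ m, f m * φ k m) * ((α.map (fun i => φ k i)).prod * φ k n) := by
  intro α
  induction α with
  | nil =>
      intro f n
      simp only [rtransList, List.foldl_nil, List.map_nil, List.prod_nil, one_mul,
        List.length_nil, pow_zero]
      have h1 : ∀ k, (∑ m, f m * φ k m) * φ k n = ∑ m, f m * (φ k m * φ k n) := by
        intro k
        rw [Finset.sum_mul]
        exact Finset.sum_congr rfl fun m _ => by ring
      simp only [h1]
      rw [Finset.sum_comm]
      have h2 : ∀ m, (∑ k, f m * (φ k m * φ k n)) = if m = n then f m else 0 := by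
        intro m
        rw [← Finset.mul_sum, col_orth φ horth]
        split <;> simp
      simp [h2, Finset.sum_ite_eq']
  | cons i α ih =>
      intro f n
      have : rtransList φ (i :: α) f n = rtransList φ α (rtrans φ i f) n := rfl
      rw [this, ih]
      have h2 : ∀ k, (∑ m, rtrans φ i f m * φ k m) * ((α.map (fun j => φ k j)).prod * φ k n)
          = Real.sqrt N * ((∑ m, f m * φ k m) *
              (((i :: α).map (fun j => φ k j)).prod * φ k n)) := by
        intro k
        rw [rtrans_hat φ horth]
        simp only [List.map_cons, List.prod_cons]
        ring
      simp only [h2, List.length_cons, ← Finset.mul_sum]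
      ring

/-- For real-valued eigenvectors, the value `T_{α_K}∘⋯∘T_{α_1} f (α_0)`
is invariant under any permutation of the tuple `(α_0, α_1, …, α_K)`. -/
theorem rtransList_perm_invariant (N : ℕ) (G : SimpleGraph (Fin N)) [DecidableRel G.Adj]
    (φ : Fin N → Fin N → ℝ) (μ : Fin N → ℝ)
    (heig : ∀ k, (G.lapMatrix ℝ).mulVec (φ k) = μ k • φ k)
    (horth : ∀ k l, (∑ n, φ k n * φ l n) = if k = l then (1 : ℝ) else 0)
    (f : Fin N → ℝ) (α₀ β₀ : Fin N) (α β : List (Fin N))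
    (hperm : List.Perm (α₀ :: α) (β₀ :: β)) :
    rtransList φ α f α₀ = rtransList φ β f β₀ := by
  rw [rtransList_closed φ horth, rtransList_closed φ horth]
  have hlen : α.length = β.length := by
    have := hperm.length_eq
    simpa using this
  rw [hlen]
  congr 1
  apply Finset.sum_congr rfl
  intro k _
  congr 1
  have hp : (((α₀ :: α).map (fun i => φ k i)).prod)
      = (((β₀ :: β).map (fun i => φ k i)).prod) := (hperm.map _).prod_eq
  simp only [List.map_cons, List.prod_cons] at hp
  calc (α.map (fun i => φ k i)).prod * φ k α₀
      = φ k α₀ * (α.map (fun i => φ k i)).prod := by ring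
    _ = φ k β₀ * (β.map (fun i => φ k i)).prod := hp
    _ = (β.map (fun i => φ k i)).prod * φ k β₀ := by ring
end

section
/- The composition of translations satisfies T_i T_j = T_{i∙j} for some binary operation ∙ on the vertices if and only if √N φ_k(i) φ_k(j) = φ_k(i∙j) for all k = 0,...,N-1 and all vertices i, j. -/
private lemma key_sum {N : ℕ} {φ : Fin N → Fin N → ℝ}
    (horth : ∀ k l, (∑ n, φ k n * φ l n) = if k = l then (1 : ℝ) else 0)
    (c : Fin N → ℝ) (k : Fin N) :
    ∑ m, (∑ l, c l * φ l m) * φ k m = c k := by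
  simp_rw [Finset.sum_mul]
  rw [Finset.sum_comm]
  have h : ∀ l : Fin N, ∑ m, c l * φ l m * φ k m = c l * (if l = k then 1 else 0) := by
    intro l
    rw [← horth l k, Finset.mul_sum]
    simp [mul_assoc]
  simp_rw [h]
  simp

/-- `T_i T_j = T_{i∙j}` (for a binary operation `∙` on vertices) if and
only if `√N φ_k(i) φ_k(j) = φ_k(i∙j)` for all `k` and all vertices `i, j`. -/
theorem semigroup_iff_eigvec_multiplicative (N : ℕ) (G : SimpleGraph (Fin N))
    [DecidableRel G.Adj]
    (φ : Fin N → Fin N → ℝ) (μ : Fin N → ℝ)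
    (heig : ∀ k, (G.lapMatrix ℝ).mulVec (φ k) = μ k • φ k)
    (horth : ∀ k l, (∑ n, φ k n * φ l n) = if k = l then (1 : ℝ) else 0)
    (op : Fin N → Fin N → Fin N) :
    (∀ i j f, rtrans φ i (rtrans φ j f) = rtrans φ (op i j) f) ↔
      (∀ k i j, Real.sqrt N * φ k i * φ k j = φ k (op i j)) := by
  have hNpos : N ≠ 0 → (0:ℝ) < Real.sqrt N := by
    intro h
    exact Real.sqrt_pos.2 (by exact_mod_cast Nat.pos_of_ne_zero h)
  constructor
  · intro h k i j
    have hN : (0:ℝ) < Real.sqrt N := hNpos k.pos.ne'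
    have h1 : ∀ n, rtrans φ j (φ k) n = Real.sqrt N * (φ k j * φ k n) := by
      intro n
      show Real.sqrt N * ∑ l, (∑ m, φ k m * φ l m) * φ l j * φ l n = _
      simp_rw [horth, ite_mul, one_mul, zero_mul, Finset.sum_ite_eq, Finset.mem_univ,
        if_true]
    have h2 : ∀ n, rtrans φ i (rtrans φ j (φ k)) n
        = Real.sqrt N * (Real.sqrt N * (φ k j * φ k i * φ k n)) := by
      intro n
      show Real.sqrt N * ∑ l, (∑ m, rtrans φ j (φ k) m * φ l m) * φ l i * φ l n = _
      have hin : ∀ l, ∑ m, rtrans φ j (φ k) m * φ l m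
          = Real.sqrt N * φ k j * (if k = l then (1:ℝ) else 0) := by
        intro l
        simp_rw [h1]
        rw [← horth k l, Finset.mul_sum]
        apply Finset.sum_congr rfl
        intro m _
        ring
      simp_rw [hin]
      rw [Finset.sum_eq_single k (fun l _ hl => by rw [if_neg (Ne.symm hl)]; ring)
        (fun hk => absurd (Finset.mem_univ k) hk)]
      rw [if_pos rfl]
      ring
    have h3 : ∀ n, rtrans φ (op i j) (φ k) n = Real.sqrt N * (φ k (op i j) * φ k n) := by
      intro n
      show Real.sqrt N * ∑ l, (∑ m, φ k m * φ l m) * φ l (op i j) * φ l n = _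
      simp_rw [horth, ite_mul, one_mul, zero_mul, Finset.sum_ite_eq, Finset.mem_univ,
        if_true]
    have hsum := congrArg (fun g : Fin N → ℝ => ∑ n, g n * φ k n) (h i j (φ k))
    simp only [h2, h3] at hsum
    have hkk := horth k k
    rw [if_pos rfl] at hkk
    have e1 : ∑ x, Real.sqrt N * (Real.sqrt N * (φ k j * φ k i * φ k x)) * φ k x
        = Real.sqrt N * (Real.sqrt N * (φ k j * φ k i)) * ∑ x, φ k x * φ k x := by
      rw [Finset.mul_sum]; apply Finset.sum_congr rfl; intro x _; ring
    have e2 : ∑ x, Real.sqrt N * (φ k (op i j) * φ k x) * φ k x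
        = Real.sqrt N * φ k (op i j) * ∑ x, φ k x * φ k x := by
      rw [Finset.mul_sum]; apply Finset.sum_congr rfl; intro x _; ring
    rw [e1, e2, hkk, mul_one, mul_one] at hsum
    have := mul_left_cancel₀ hN.ne' hsum
    rw [← this]; ring
  · intro h i j f
    funext n
    show Real.sqrt N * ∑ k, (∑ m, rtrans φ j f m * φ k m) * φ k i * φ k n = _
    have hin : ∀ k : Fin N, ∑ m, rtrans φ j f m * φ k m
        = Real.sqrt N * ((∑ m, f m * φ k m) * φ k j) := by
      intro k
      have : ∀ m, rtrans φ j f m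
          = ∑ l, (Real.sqrt N * ((∑ m', f m' * φ l m') * φ l j)) * φ l m := by
        intro m
        show Real.sqrt N * ∑ l, (∑ m', f m' * φ l m') * φ l j * φ l m = _
        rw [Finset.mul_sum]
        apply Finset.sum_congr rfl
        intro l _
        ring
      simp_rw [this]
      exact key_sum horth _ k
    simp_rw [hin]
    show _ = Real.sqrt N * ∑ k, (∑ m, f m * φ k m) * φ k (op i j) * φ k n
    congr 1
    apply Finset.sum_congr rfl
    intro k _
    rw [← h k i j]
    ring
end

section
/- If the translation operators on a graph form a semigroup, i.e., for all i, j there exists i∙j with T_i T_j = T_{i∙j}, then |φ_k(n)| = 1/√N for all k and n; equivalently, √N Φ is a (complex) Hadamard matrix. -/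
/-!
Each basis vector `φ_l` is an eigenvector of every translation:
`T_i φ_l = √N conj(φ_l(i)) φ_l`. Applying the semigroup law to `φ_l` therefore gives
`√N |φ_l(i)| |φ_l(j)| = |φ_l(i∙j)|`, so the moduli of the entries of `φ_l` are closed under
`(x, y) ↦ √N x y`. At a maximal modulus `M` this forces `√N M² ≤ M`, so every modulus is at
most `1/√N`; since the squared moduli sum to `1`, all of them equal `1/N`.
-/

/-- The graph Fourier transform of `f` w.r.t. the eigenbasis `φ`. -/
noncomputable def gft {N : ℕ} (φ : Fin N → Fin N → ℂ) (f : Fin N → ℂ) (k : Fin N) : ℂ :=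
  ∑ m, f m * star (φ k m)

/-- Graph translation: `(T_i f)(n) = √N Σ_k f̂(λ_k) φ_k*(i) φ_k(n)`. -/
noncomputable def gtrans {N : ℕ} (φ : Fin N → Fin N → ℂ) (i : Fin N) (f : Fin N → ℂ) :
    Fin N → ℂ :=
  fun n => (Real.sqrt N : ℂ) * ∑ k, gft φ f k * star (φ k i) * φ k n

open Finset

section ScaledProducts

variable {ι : Type*} {a : ι → ℝ}

theorem mul_le_one_of_scaled_mul_mem_range [Finite ι] {c : ℝ} (hc : 0 ≤ c) (ha : ∀ i, 0 ≤ a i)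
    (hmul : ∀ i j, c * a i * a j ∈ Set.range a) (i : ι) : c * a i ≤ 1 := by
  have : Nonempty ι := ⟨i⟩
  obtain ⟨m, hm⟩ := Finite.exists_max a
  obtain ⟨t, ht⟩ := hmul m m
  have hsq : c * a m * a m ≤ a m := ht ▸ hm t
  have hcm : c * a m ≤ 1 := by
    rcases (ha m).eq_or_lt with h0 | hpos
    · simp [← h0]
    · exact (mul_le_iff_le_one_left hpos).mp hsq
  exact (mul_le_mul_of_nonneg_left (hm i) hc).trans hcm

theorem eq_one_div_sqrt_card_of_sum_sq_eq_one [Fintype ι] (ha : ∀ i, 0 ≤ a i)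
    (hsum : ∑ i, a i ^ 2 = 1)
    (hmul : ∀ i j, √(Fintype.card ι) * a i * a j ∈ Set.range a) (i : ι) :
    a i = 1 / √(Fintype.card ι) := by
  set n : ℝ := (Fintype.card ι : ℝ)
  have hn : 0 < n := Nat.cast_pos.mpr (Fintype.card_pos_iff.mpr ⟨i⟩)
  have hle : ∀ j, a j ^ 2 ≤ 1 / n := fun j => by
    rw [le_div_iff₀ hn, ← Real.sq_sqrt hn.le, ← mul_pow, mul_comm]
    exact pow_le_one₀ (mul_nonneg (Real.sqrt_nonneg _) (ha j))
      (mul_le_one_of_scaled_mul_mem_range (Real.sqrt_nonneg _) ha hmul j)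
  have hsum' : ∑ j, a j ^ 2 = ∑ _j : ι, 1 / n := by
    rw [hsum, sum_const, card_univ, nsmul_eq_mul, mul_one_div_cancel hn.ne']
  have hsq : a i ^ 2 = 1 / n := (sum_eq_sum_iff_of_le fun j _ => hle j).mp hsum' i (mem_univ i)
  rw [← Real.sqrt_sq (ha i), hsq, Real.sqrt_div' _ hn.le, Real.sqrt_one]

end ScaledProducts

section OrthonormalBasis

variable {N : ℕ} {φ : Fin N → Fin N → ℂ}
  (horth : ∀ k l, (∑ n, φ k n * star (φ l n)) = if k = l then (1 : ℂ) else 0)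
include horth

theorem gft_self (l : Fin N) : gft φ (φ l) = Pi.single l 1 := by
  ext k
  rw [gft, horth, Pi.single_apply]
  simp only [eq_comm]

theorem gtrans_smul_self (i l : Fin N) (c : ℂ) :
    gtrans φ i (c • φ l) = ((√N : ℂ) * c * star (φ l i)) • φ l := by
  have hgft : gft φ (c • φ l) = c • Pi.single l 1 := by
    ext k
    simp only [gft, Pi.smul_apply, smul_eq_mul, mul_assoc, ← mul_sum]
    rw [← gft, gft_self horth]
  ext n
  simp [gtrans, hgft, Pi.single_apply, mul_assoc]

theorem gtrans_self (i l : Fin N) :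
    gtrans φ i (φ l) = ((√N : ℂ) * star (φ l i)) • φ l := by
  simpa using gtrans_smul_self horth i l 1

theorem basis_ne_zero (l : Fin N) : φ l ≠ 0 := by
  intro h
  simpa [h] using horth l l

theorem sum_norm_sq_basis (l : Fin N) : ∑ n, ‖φ l n‖ ^ 2 = 1 := by
  have h := horth l l
  rw [if_pos rfl] at h
  have h' : ∑ n, ((‖φ l n‖ ^ 2 : ℝ) : ℂ) = 1 := by
    rw [← h]
    exact sum_congr rfl fun n _ => by push_cast; exact (Complex.mul_conj' _).symm
  exact_mod_cast h'

theorem sqrt_mul_norm_mul_norm_eq_norm_of_gtrans_comp {op : Fin N → Fin N → Fin N}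
    (hop : ∀ i j f, gtrans φ i (gtrans φ j f) = gtrans φ (op i j) f) (l i j : Fin N) :
    √N * ‖φ l i‖ * ‖φ l j‖ = ‖φ l (op i j)‖ := by
  have hcoef : (√N : ℂ) * ((√N : ℂ) * star (φ l j)) * star (φ l i) =
      (√N : ℂ) * star (φ l (op i j)) := by
    apply smul_left_injective ℂ (basis_ne_zero horth l)
    simpa only [gtrans_self horth, gtrans_smul_self horth] using hop i j (φ l)
  have hN : 0 < √(N : ℝ) := Real.sqrt_pos.mpr (Nat.cast_pos.mpr (Fin.pos l))
  have hnorm := congrArg norm hcoef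
  simp only [norm_mul, norm_star, Complex.norm_real, Real.norm_of_nonneg hN.le] at hnorm
  rw [← mul_right_inj' hN.ne', ← hnorm]
  ring

end OrthonormalBasis

theorem semigroup_implies_hadamard_general (N : ℕ) (φ : Fin N → Fin N → ℂ)
    (horth : ∀ k l, (∑ n, φ k n * star (φ l n)) = if k = l then (1 : ℂ) else 0)
    (hsemi : ∃ op : Fin N → Fin N → Fin N,
      ∀ i j f, gtrans φ i (gtrans φ j f) = gtrans φ (op i j) f) :
    ∀ k n, ‖φ k n‖ = 1 / Real.sqrt N := by
  obtain ⟨op, hop⟩ := hsemi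
  intro k
  have hmul (i j : Fin N) :
      √(Fintype.card (Fin N)) * ‖φ k i‖ * ‖φ k j‖ ∈ Set.range (‖φ k ·‖) :=
    ⟨op i j, by rw [Fintype.card_fin, sqrt_mul_norm_mul_norm_eq_norm_of_gtrans_comp horth hop]⟩
  simpa using eq_one_div_sqrt_card_of_sum_sq_eq_one (fun n => norm_nonneg (φ k n))
    (sum_norm_sq_basis horth k) hmul

/-- If the translation operators form a semigroup, i.e. for all `i, j`
there is `i∙j` with `T_i T_j = T_{i∙j}`, then all eigenvector entries have modulus
`1/√N`; equivalently `√N Φ` is a complex Hadamard matrix. -/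
theorem semigroup_implies_hadamard (N : ℕ) (hN : 0 < N) (G : SimpleGraph (Fin N))
    [DecidableRel G.Adj]
    (φ : Fin N → Fin N → ℂ) (μ : Fin N → ℝ)
    (heig : ∀ k, (G.lapMatrix ℂ).mulVec (φ k) = (μ k : ℂ) • φ k)
    (horth : ∀ k l, (∑ n, φ k n * star (φ l n)) = if k = l then (1 : ℂ) else 0)
    (hsemi : ∃ op : Fin N → Fin N → Fin N,
      ∀ i j f, gtrans φ i (gtrans φ j f) = gtrans φ (op i j) f) :
    ∀ k n, ‖φ k n‖ = 1 / Real.sqrt N :=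
  semigroup_implies_hadamard_general N φ horth hsemi
end

section
/- The graph translation operator T_i is invertible if and only if φ_k(i) ≠ 0 for all k = 0, ..., N-1; moreover, the eigenvectors φ_k with φ_k(i) = 0 form an orthonormal basis of the null space of T_i. -/
/-- The matrix of the graph translation operator `T_i`:
`(T_i f)(n) = √N Σ_k ⟨f,φ_k⟩ φ_k*(i) φ_k(n)`. -/
noncomputable def transMat {N : ℕ} (φ : Fin N → Fin N → ℂ) (i : Fin N) :
    Matrix (Fin N) (Fin N) ℂ :=
  Matrix.of fun n m => (Real.sqrt N : ℂ) * ∑ k, star (φ k i) * φ k n * star (φ k m)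

/-- `T_i` is invertible iff `φ_k(i) ≠ 0` for all `k`; moreover the
eigenvectors vanishing at `i` span (and, being orthonormal, form an orthonormal basis of)
the null space of `T_i`. -/
theorem transMat_invertible_iff (N : ℕ) (hN : 0 < N) (G : SimpleGraph (Fin N))
    [DecidableRel G.Adj] (hconn : G.Connected)
    (φ : Fin N → Fin N → ℂ) (μ : Fin N → ℝ)
    (heig : ∀ k, (G.lapMatrix ℂ).mulVec (φ k) = (μ k : ℂ) • φ k)
    (horth : ∀ k l, (∑ n, φ k n * star (φ l n)) = if k = l then (1 : ℂ) else 0)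
    (h0 : ∀ n, φ ⟨0, hN⟩ n = ((Real.sqrt N : ℂ))⁻¹)
    (i : Fin N) :
    (IsUnit (transMat φ i) ↔ ∀ k, φ k i ≠ 0) ∧
    LinearMap.ker (Matrix.toLin' (transMat φ i)) =
      Submodule.span ℂ (φ '' {k : Fin N | φ k i = 0}) := by
  classical
  set s : ℂ := (Real.sqrt N : ℂ) with hsdef
  have hs : s ≠ 0 := by
    simp only [hsdef, ne_eq, Complex.ofReal_eq_zero]
    exact Real.sqrt_ne_zero'.mpr (by exact_mod_cast hN)
  -- column orthonormality (conjugated version of horth)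
  have hUU : ∀ k l, ∑ n, star (φ k n) * φ l n = if k = l then (1 : ℂ) else 0 := by
    intro k l
    rw [show (∑ n, star (φ k n) * φ l n) = ∑ n, φ l n * star (φ k n) from
      Finset.sum_congr rfl fun n _ => mul_comm _ _, horth l k]
    simp [eq_comm]
  have hU1 : (Matrix.of fun k n => star (φ k n)) * (Matrix.of fun n k => φ k n)
      = (1 : Matrix (Fin N) (Fin N) ℂ) := by
    ext k l
    simpa [Matrix.mul_apply, Matrix.one_apply] using hUU k l
  have hU2 := mul_eq_one_comm.mp hU1
  have hcol : ∀ n m, ∑ k, φ k n * (starRingEnd ℂ) (φ k m) = if n = m then (1 : ℂ) else 0 := by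
    intro n m
    have := congrFun (congrFun hU2 n) m
    simpa [Matrix.mul_apply, Matrix.one_apply] using this
  -- coefficients
  set c : (Fin N → ℂ) → Fin N → ℂ := fun v k => ∑ m, star (φ k m) * v m with hcdef
  have hcomp : ∀ v n, ∑ k, c v k * φ k n = v n := by
    intro v n
    calc ∑ k, c v k * φ k n = ∑ m, (∑ k, φ k n * star (φ k m)) * v m := by
          simp only [hcdef, Finset.sum_mul]
          rw [Finset.sum_comm]
          exact Finset.sum_congr rfl fun k _ => Finset.sum_congr rfl fun m _ => by ring
      _ = v n := by simp [hcol]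
  have hmv : ∀ v n, (transMat φ i).mulVec v n = s * ∑ k, star (φ k i) * c v k * φ k n := by
    intro v n
    simp only [Matrix.mulVec, dotProduct, transMat, Matrix.of_apply, hcdef, ← hsdef]
    simp only [Finset.mul_sum, Finset.sum_mul]
    rw [Finset.sum_comm]
    exact Finset.sum_congr rfl fun k _ => Finset.sum_congr rfl fun m _ => by ring
  have hpair : ∀ v l, ∑ n, (transMat φ i).mulVec v n * star (φ l n)
      = s * (star (φ l i) * c v l) := by
    intro v l
    simp only [hmv]
    calc ∑ n, (s * ∑ k, star (φ k i) * c v k * φ k n) * star (φ l n)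
        = ∑ k, (s * (star (φ k i) * c v k)) * (∑ n, φ k n * star (φ l n)) := by
          simp only [Finset.sum_mul, Finset.mul_sum]
          rw [Finset.sum_comm]
          exact Finset.sum_congr rfl fun k _ => Finset.sum_congr rfl fun n _ => by ring
      _ = s * (star (φ l i) * c v l) := by
          simp only [horth, mul_ite, mul_one, mul_zero]
          simp
  have hker : ∀ v, (transMat φ i).mulVec v = 0 ↔ ∀ k, star (φ k i) * c v k = 0 := by
    intro v
    constructor
    · intro h k
      have h2 := hpair v k
      rw [h] at h2
      simp only [Pi.zero_apply, zero_mul, Finset.sum_const_zero] at h2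
      exact (mul_eq_zero.mp h2.symm).resolve_left hs
    · intro h
      funext n
      rw [hmv, Pi.zero_apply]
      rw [Finset.sum_eq_zero fun k _ => by rw [h k, zero_mul], mul_zero]
  have hcφ : ∀ l k, c (φ l) k = if k = l then (1 : ℂ) else 0 := fun l k => hUU k l
  have hφker : ∀ k, φ k i = 0 → (transMat φ i).mulVec (φ k) = 0 := by
    intro k hk
    rw [hker]
    intro l
    rw [hcφ]
    by_cases hlk : l = k
    · subst hlk; simp [hk]
    · simp [hlk]
  have hφne : ∀ k, φ k ≠ (0 : Fin N → ℂ) := by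
    intro k hk
    have := horth k k
    rw [hk] at this
    simp at this
  constructor
  · constructor
    · intro hA k
      by_contra hk
      have h0' := hφker k hk
      refine hφne k ?_
      have hinv := Matrix.nonsing_inv_mul (transMat φ i) ((Matrix.isUnit_iff_isUnit_det _).mp hA)
      calc φ k = ((transMat φ i)⁻¹ * transMat φ i).mulVec (φ k) := by
            rw [hinv, Matrix.one_mulVec]
        _ = (transMat φ i)⁻¹.mulVec ((transMat φ i).mulVec (φ k)) := by
            rw [← Matrix.mulVec_mulVec]
        _ = 0 := by rw [h0', Matrix.mulVec_zero]
    · intro hk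
      rw [Matrix.isUnit_iff_isUnit_det _, isUnit_iff_ne_zero]
      intro hdet
      obtain ⟨v, hv, hv0⟩ := (Matrix.exists_mulVec_eq_zero_iff).mpr hdet
      apply hv
      funext n
      have hc : ∀ l, c v l = 0 := by
        intro l
        have := (hker v).mp hv0 l
        exact (mul_eq_zero.mp this).resolve_left (by simpa using hk l)
      have h2 := hcomp v n
      simp only [hc, zero_mul, Finset.sum_const_zero] at h2
      exact h2.symm
  · apply le_antisymm
    · intro v hv
      rw [LinearMap.mem_ker, Matrix.toLin'_apply] at hv
      have hc : ∀ k, φ k i ≠ 0 → c v k = 0 := fun k hki =>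
        (mul_eq_zero.mp ((hker v).mp hv k)).resolve_left (by simpa using hki)
      have hv' : v = ∑ k ∈ Finset.univ.filter (fun k => φ k i = 0), c v k • φ k := by
        funext n
        rw [← hcomp v n, Finset.sum_apply, Finset.sum_filter]
        refine Finset.sum_congr rfl fun k _ => ?_
        by_cases hki : φ k i = 0
        · simp [hki, smul_eq_mul]
        · simp [hki, hc k hki]
      rw [hv']
      refine Submodule.sum_mem _ fun k hk => Submodule.smul_mem _ _
        (Submodule.subset_span ⟨k, ?_, rfl⟩)
      simpa using (Finset.mem_filter.mp hk).2
    · rw [Submodule.span_le]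
      rintro x ⟨k, hk, rfl⟩
      rw [SetLike.mem_coe, LinearMap.mem_ker, Matrix.toLin'_apply]
      exact hφker k hk
end

section
/- The graph translation operator T_i is unitary if and only if |φ_k(i)| = 1/√N for all k = 0, ..., N-1. -/
theorem Unitary.mul_mul_star_mem_iff {R : Type*} [Monoid R] [StarMul R] {U x : R}
    (hU : U ∈ unitary R) : U * x * star U ∈ unitary R ↔ x ∈ unitary R := by
  refine ⟨fun h => ?_, fun h => mul_mem (mul_mem hU h) (Unitary.star_mem hU)⟩
  have hx : x = star U * (U * x * star U) * U := by
    simp only [mul_assoc, Unitary.star_mul_self_of_mem hU, mul_one,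
      ← mul_assoc (star U), one_mul]
  rw [hx]
  exact mul_mem (mul_mem (Unitary.star_mem hU) h) hU

theorem RCLike.star_mul_self_eq_one_iff {𝕜 : Type*} [RCLike 𝕜] {z : 𝕜} :
    star z * z = 1 ↔ ‖z‖ = 1 := by
  rw [RCLike.star_def, RCLike.conj_mul, ← RCLike.ofReal_pow, ← RCLike.ofReal_one,
    RCLike.ofReal_inj, pow_eq_one_iff_of_nonneg (norm_nonneg z) two_ne_zero]

namespace Matrix

variable {n α : Type*} [Fintype n] [DecidableEq n]

theorem diagonal_mem_unitaryGroup_iff [CommRing α] [StarRing α] {d : n → α} :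
    diagonal d ∈ unitaryGroup n α ↔ ∀ k, star (d k) * d k = 1 := by
  rw [mem_unitaryGroup_iff', star_eq_conjTranspose, diagonal_conjTranspose,
    diagonal_mul_diagonal, diagonal_eq_one, funext_iff]
  rfl

theorem of_mem_unitaryGroup_of_orthonormal [CommRing α] [StarRing α] {φ : n → n → α}
    (horth : ∀ k l, ∑ j, φ k j * star (φ l j) = if k = l then 1 else 0) :
    of φ ∈ unitaryGroup n α := by
  rw [mem_unitaryGroup_iff]
  ext k l
  simp [mul_apply, horth, one_apply]

end Matrix

open Matrix in
theorem transMat_eq_mul_diagonal_mul_star {N : ℕ} (φ : Fin N → Fin N → ℂ) (i : Fin N) :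
    transMat φ i =
      (of φ)ᵀ * diagonal (fun k => (Real.sqrt N : ℂ) * star (φ k i)) * star (of φ)ᵀ := by
  ext n m
  rw [mul_apply]
  simp only [transMat, mul_diagonal, of_apply, transpose_apply, star_apply, Finset.mul_sum]
  exact Finset.sum_congr rfl fun k _ => by ring

theorem transMat_unitary_iff_general (N : ℕ)
    (φ : Fin N → Fin N → ℂ)
    (horth : ∀ k l, (∑ n, φ k n * star (φ l n)) = if k = l then (1 : ℂ) else 0)
    (i : Fin N) :
    transMat φ i ∈ Matrix.unitaryGroup (Fin N) ℂ ↔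
      ∀ k, ‖φ k i‖ = 1 / Real.sqrt N := by
  have hV := Matrix.transpose_mem_unitaryGroup_iff.mpr
    (Matrix.of_mem_unitaryGroup_of_orthonormal horth)
  rw [transMat_eq_mul_diagonal_mul_star, Unitary.mul_mul_star_mem_iff hV,
    Matrix.diagonal_mem_unitaryGroup_iff]
  refine forall_congr' fun k => ?_
  have hN : Real.sqrt N ≠ 0 := by
    have : 0 < N := k.pos
    positivity
  rw [RCLike.star_mul_self_eq_one_iff, norm_mul, norm_star, Complex.norm_real,
    Real.norm_of_nonneg (Real.sqrt_nonneg _), eq_div_iff hN, mul_comm]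

/-- The graph translation operator `T_i` is unitary if and only if
`|φ_k(i)| = 1/√N` for all `k = 0, …, N-1`. -/
theorem transMat_unitary_iff (N : ℕ) (G : SimpleGraph (Fin N)) [DecidableRel G.Adj]
    (φ : Fin N → Fin N → ℂ) (μ : Fin N → ℝ)
    (heig : ∀ k, (G.lapMatrix ℂ).mulVec (φ k) = (μ k : ℂ) • φ k)
    (horth : ∀ k l, (∑ n, φ k n * star (φ l n)) = if k = l then (1 : ℂ) else 0)
    (i : Fin N) :
    transMat φ i ∈ Matrix.unitaryGroup (Fin N) ℂ ↔
      ∀ k, ‖φ k i‖ = 1 / Real.sqrt N :=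
  transMat_unitary_iff_general N φ horth i
end

section
/- Let G_1(V_1,E_1), G_2(V_2,E_2) be connected graphs on disjoint vertex sets whose Laplacians share a common eigenvalue λ > 0 with eigenvectors φ_(1), φ_(2) each having nonempty zero set. Form G by taking the disjoint union and adding a nonempty set E_0 of edges, each joining a zero of φ_(1) to a zero of φ_(2). Then the function φ defined by φ = φ_(j) on V_j is an eigenvector of the Laplacian of G with eigenvalue λ. -/
open Finset in
lemma lap_mulVec_eq_sum_ite {V : Type*} [Fintype V] [DecidableEq V]
    (H : SimpleGraph V) [DecidableRel H.Adj] (f : V → ℝ) (v : V) :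
    (H.lapMatrix ℝ).mulVec f v = ∑ u, if H.Adj v u then f v - f u else 0 := by
  rw [SimpleGraph.lapMatrix_mulVec_apply]
  have hdeg : (H.degree v : ℝ) * f v = ∑ u ∈ H.neighborFinset v, f v := by
    rw [Finset.sum_const, SimpleGraph.degree, nsmul_eq_mul]
  rw [hdeg, ← Finset.sum_sub_distrib]
  rw [SimpleGraph.neighborFinset_def, ← Finset.sum_filter]
  congr 1
  ext u
  simp [SimpleGraph.mem_neighborFinset]

/-- Let `G₁, G₂` be connected graphs on disjoint vertex sets whose
Laplacians share an eigenvalue `λ > 0` with eigenvectors `φ₁, φ₂`, each with nonempty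
zero set.  Form `G` on the disjoint union by keeping the edges of `G₁` and `G₂` and
adding a nonempty set of cross edges, each joining a zero of `φ₁` to a zero of `φ₂`.
Then `φ = Sum.elim φ₁ φ₂` is an eigenvector of the Laplacian of `G` with eigenvalue `λ`. -/
theorem graph_sum_eigenvector {V₁ V₂ : Type*} [Fintype V₁] [Fintype V₂]
    [DecidableEq V₁] [DecidableEq V₂]
    (G₁ : SimpleGraph V₁) (G₂ : SimpleGraph V₂)
    [DecidableRel G₁.Adj] [DecidableRel G₂.Adj]
    (hc₁ : G₁.Connected) (hc₂ : G₂.Connected)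
    (lam : ℝ) (hlam : 0 < lam) (φ₁ : V₁ → ℝ) (φ₂ : V₂ → ℝ)
    (heig₁ : (G₁.lapMatrix ℝ).mulVec φ₁ = lam • φ₁)
    (heig₂ : (G₂.lapMatrix ℝ).mulVec φ₂ = lam • φ₂)
    (hne₁ : φ₁ ≠ 0) (hne₂ : φ₂ ≠ 0)
    (hz₁ : ∃ x, φ₁ x = 0) (hz₂ : ∃ x, φ₂ x = 0)
    (G : SimpleGraph (V₁ ⊕ V₂)) [DecidableRel G.Adj]
    (hll : ∀ x y, G.Adj (Sum.inl x) (Sum.inl y) ↔ G₁.Adj x y)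
    (hrr : ∀ x y, G.Adj (Sum.inr x) (Sum.inr y) ↔ G₂.Adj x y)
    (hcross : ∀ x y, G.Adj (Sum.inl x) (Sum.inr y) → φ₁ x = 0 ∧ φ₂ y = 0)
    (hE₀ : ∃ x y, G.Adj (Sum.inl x) (Sum.inr y)) :
    (G.lapMatrix ℝ).mulVec (Sum.elim φ₁ φ₂) = lam • Sum.elim φ₁ φ₂ ∧
    Sum.elim φ₁ φ₂ ≠ 0 := by
  constructor
  · funext v
    rw [lap_mulVec_eq_sum_ite, Fintype.sum_sum_type]
    cases v with
    | inl x =>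
        have h2 : ∀ y : V₂,
            (if G.Adj (Sum.inl x) (Sum.inr y) then
              Sum.elim φ₁ φ₂ (Sum.inl x) - Sum.elim φ₁ φ₂ (Sum.inr y) else 0) = 0 := by
          intro y
          split_ifs with h
          · obtain ⟨h1, h2⟩ := hcross x y h
            simp [h1, h2]
          · rfl
        rw [Finset.sum_congr rfl (fun y _ => h2 y), Finset.sum_const, smul_zero, add_zero]
        have := congrFun heig₁ x
        rw [lap_mulVec_eq_sum_ite] at this
        simpa [hll] using this
    | inr x =>
        have h2 : ∀ y : V₁,
            (if G.Adj (Sum.inr x) (Sum.inl y) then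
              Sum.elim φ₁ φ₂ (Sum.inr x) - Sum.elim φ₁ φ₂ (Sum.inl y) else 0) = 0 := by
          intro y
          split_ifs with h
          · obtain ⟨h1, h2⟩ := hcross y x h.symm
            simp [h1, h2]
          · rfl
        rw [Finset.sum_congr rfl (fun y _ => h2 y), Finset.sum_const, smul_zero, zero_add]
        have := congrFun heig₂ x
        rw [lap_mulVec_eq_sum_ite] at this
        simpa [hrr] using this
  · intro h
    apply hne₁
    funext x
    exact congrFun h (Sum.inl x)
end

section
/- Let G(V,E) be a graph, S ⊆ V, and H the induced subgraph on S with Laplacian L_S. Suppose φ^(S) is an eigenvector of L_S with eigenvalue λ, and every edge of G joining S to V∖S has its S-endpoint in the zero set of φ^(S). Then the extension of φ^(S) by zero to all of V is an eigenvector of the Laplacian of G with eigenvalue λ. -/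
private lemma lap_apply_sum {W : Type*} [Fintype W] [DecidableEq W] (H : SimpleGraph W) [DecidableRel H.Adj]
    (w : W) (f : W → ℝ) :
    ((H.lapMatrix ℝ).mulVec f) w = ∑ u : W, if H.Adj w u then f w - f u else 0 := by
  rw [SimpleGraph.lapMatrix_mulVec_apply]
  have hdeg : (H.degree w : ℝ) * f w = ∑ u : W, if H.Adj w u then f w else 0 := by
    rw [Finset.sum_ite, Finset.sum_const_zero, add_zero, Finset.sum_const,
      nsmul_eq_mul]
    congr 1
    rw [SimpleGraph.degree, SimpleGraph.neighborFinset_eq_filter]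
  rw [hdeg, SimpleGraph.neighborFinset_eq_filter, Finset.sum_filter,
    ← Finset.sum_sub_distrib]
  apply Finset.sum_congr rfl
  intro u _
  split_ifs <;> ring

/-- Let `G` be a graph on `V`, `S ⊆ V`, and `H` the induced subgraph on
`S` with Laplacian `L_S`.  If `φˢ` is an eigenvector of `L_S` with eigenvalue `λ`, and
every edge of `G` joining `S` to `V ∖ S` has its `S`-endpoint in the zero set of `φˢ`,
then the extension of `φˢ` by zero is an eigenvector of the Laplacian of `G` with
eigenvalue `λ`. -/
theorem induced_eigenvector_extends_by_zero {V : Type*} [Fintype V] [DecidableEq V]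
    (G : SimpleGraph V) [DecidableRel G.Adj]
    (S : Set V) [DecidablePred (· ∈ S)] [DecidableRel (G.induce S).Adj]
    (φS : S → ℝ) (lam : ℝ)
    (heig : ((G.induce S).lapMatrix ℝ).mulVec φS = lam • φS)
    (hne : φS ≠ 0)
    (hbd : ∀ (x : V) (hx : x ∈ S) (y : V), G.Adj x y → y ∉ S → φS ⟨x, hx⟩ = 0) :
    (G.lapMatrix ℝ).mulVec (fun v => if h : v ∈ S then φS ⟨v, h⟩ else 0) =
      lam • (fun v => if h : v ∈ S then φS ⟨v, h⟩ else 0) ∧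
    (fun v => if h : v ∈ S then φS ⟨v, h⟩ else 0) ≠ (0 : V → ℝ) := by
  classical
  set φ : V → ℝ := fun v => if h : v ∈ S then φS ⟨v, h⟩ else 0 with hφ
  constructor
  · funext v
    rw [lap_apply_sum]
    by_cases hv : v ∈ S
    · have h2 := congrFun heig ⟨v, hv⟩
      rw [lap_apply_sum] at h2
      have hφv : φ v = φS ⟨v, hv⟩ := by simp [hφ, hv]
      have hsum : ∑ u : V, (if G.Adj v u then φ v - φ u else 0)
          = ∑ u : S, (if (G.induce S).Adj ⟨v, hv⟩ u then φS ⟨v, hv⟩ - φS u else 0) := by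
        have e1 : (∑ u : V, (if G.Adj v u then φ v - φ u else 0))
            = ∑ u ∈ S.toFinset, (if G.Adj v u then φ v - φ u else 0) := by
          symm
          apply Finset.sum_subset (Finset.subset_univ _)
          intro u _ hu
          rw [Set.mem_toFinset] at hu
          by_cases ha : G.Adj v u
          · have h0 : φS ⟨v, hv⟩ = 0 := hbd v hv u ha hu
            have hu0 : φ u = 0 := by simp [hφ, hu]
            simp [ha, hφv, h0, hu0]
          · simp [ha]
        rw [e1, Finset.sum_subtype S.toFinset (fun x => Set.mem_toFinset)]
        apply Finset.sum_congr rfl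
        intro u _
        by_cases ha : G.Adj v (u : V)
        · have h1 : (G.induce S).Adj ⟨v, hv⟩ u := by
            simp [SimpleGraph.comap_adj, ha]
          simp only [ha, h1, if_true, hφv]
          congr 1
          simp [hφ, u.2]
        · have h1 : ¬ (G.induce S).Adj ⟨v, hv⟩ u := by
            simp [SimpleGraph.comap_adj, ha]
          simp [ha, h1]
      rw [hsum, h2]
      simp [Pi.smul_apply, hφv]
    · have : ∀ u : V, (if G.Adj v u then φ v - φ u else 0) = 0 := by
        intro u
        by_cases ha : G.Adj v u
        · have hv0 : φ v = 0 := by simp [hφ, hv]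
          have hu0 : φ u = 0 := by
            by_cases hu : u ∈ S
            · have : φS ⟨u, hu⟩ = 0 := hbd u hu v ha.symm hv
              simp [hφ, hu, this]
            · simp [hφ, hu]
          simp [ha, hv0, hu0]
        · simp [ha]
      simp only [this, Finset.sum_const_zero, Pi.smul_apply]
      have : φ v = 0 := by simp [hφ, hv]
      simp [this]
  · obtain ⟨x, hx⟩ := Function.ne_iff.mp hne
    intro h
    have := congrFun h (x : V)
    simp only [hφ, x.2, dif_pos, Pi.zero_apply] at this
    exact hx (by rwa [Subtype.eta] at this)
end
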